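/- Assume k is algebraically closed. The assignment P ↦ (P : S^⊥) defines H-equivariant topological quotient maps spec kΓ → S^⊥-spec kΓ and max kΓ → S^⊥-max kΓ. -/

import Mathlib

/-- The character `α ↦ ∏ᵢ hᵢ^{αᵢ}` of `Γ = ℤⁿ` attached to `h ∈ (kˣ)ⁿ`. -/
def powChar {k : Type*} [Field k] {n : ℕ} (h : Fin n → kˣ) :
    Multiplicative (Fin n → ℤ) →* kˣ where
  toFun α := ∏ i, h i ^ (Multiplicative.toAdd α i)
  map_one' := by simp
  map_mul' a b := by
    simp [toAdd_mul, Pi.add_apply, zpow_add, Finset.prod_mul_distrib]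

/-- Auxiliary monoid homomorphism `α ↦ χ(α) yᵅ` into the Laurent polynomial ring
`kΓ = k[y₁^{±1},…,yₙ^{±1}]` (realized as the group algebra of `Γ = ℤⁿ`). -/
noncomputable def scaleMonHom {k : Type*} [Field k] {n : ℕ}
    (χ : Multiplicative (Fin n → ℤ) →* kˣ) :
    Multiplicative (Fin n → ℤ) →* AddMonoidAlgebra k (Fin n → ℤ) where
  toFun α := ((χ α : k)) • AddMonoidAlgebra.of k (Fin n → ℤ) α
  map_one' := by
    show (↑(χ 1) : k) • (AddMonoidAlgebra.of k (Fin n → ℤ)) 1 = 1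
    rw [map_one, map_one, Units.val_one, one_smul]
  map_mul' a b := by
    show (↑(χ (a * b)) : k) • (AddMonoidAlgebra.of k (Fin n → ℤ)) (a * b)
      = ((↑(χ a) : k) • (AddMonoidAlgebra.of k (Fin n → ℤ)) a) *
        ((↑(χ b) : k) • (AddMonoidAlgebra.of k (Fin n → ℤ)) b)
    rw [map_mul, map_mul, Units.val_mul, smul_mul_smul_comm]

/-- The `k`-algebra automorphism of the Laurent polynomial ring scaling the monomial
`yᵅ` by `χ(α)`, for a character `χ : Γ → kˣ`. -/
noncomputable def lactM {k : Type*} [Field k] {n : ℕ}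
    (χ : Multiplicative (Fin n → ℤ) →* kˣ) :
    AddMonoidAlgebra k (Fin n → ℤ) →ₐ[k] AddMonoidAlgebra k (Fin n → ℤ) :=
  AddMonoidAlgebra.lift k _ (Fin n → ℤ) (scaleMonHom χ)

/-- The action of `h ∈ H = (kˣ)ⁿ` on the Laurent polynomial ring, `yᵢ ↦ hᵢ yᵢ`. -/
noncomputable def lact {k : Type*} [Field k] {n : ℕ} (h : Fin n → kˣ) :
    AddMonoidAlgebra k (Fin n → ℤ) →ₐ[k] AddMonoidAlgebra k (Fin n → ℤ) :=
  lactM (powChar h)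

variable {k : Type*} [Field k] {n : ℕ}

/-- `S^⊥ = {h ∈ H = Hom(Γ,kˣ) : h ≡ 1 on S}`, where `S = rad σ`. -/
def SperpSet (σ : (Fin n → ℤ) → (Fin n → ℤ) → kˣ) :
    Set (Multiplicative (Fin n → ℤ) →* kˣ) :=
  {χ | ∀ α, (∀ β, σ α β = 1) → χ (Multiplicative.ofAdd α) = 1}

/-- An `S^⊥`-ideal of `kΓ`: an ideal stable under the action of `S^⊥`. -/
def IsSperpIdeal (σ : (Fin n → ℤ) → (Fin n → ℤ) → kˣ)
    (I : Ideal (AddMonoidAlgebra k (Fin n → ℤ))) : Prop :=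
  ∀ χ ∈ SperpSet σ, Ideal.comap (lactM χ) I = I

/-- `(I : S^⊥) = ⋂_{h ∈ S^⊥} h(I)`. -/
noncomputable def resSperp (σ : (Fin n → ℤ) → (Fin n → ℤ) → kˣ)
    (I : Ideal (AddMonoidAlgebra k (Fin n → ℤ))) : Ideal (AddMonoidAlgebra k (Fin n → ℤ)) :=
  ⨅ χ ∈ SperpSet σ, Ideal.comap (lactM χ) I

/-- An `S^⊥`-prime ideal of `kΓ`. -/
def IsSperpPrime (σ : (Fin n → ℤ) → (Fin n → ℤ) → kˣ)
    (Q : Ideal (AddMonoidAlgebra k (Fin n → ℤ))) : Prop :=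
  IsSperpIdeal σ Q ∧ Q ≠ ⊤ ∧
    ∀ I J : Ideal (AddMonoidAlgebra k (Fin n → ℤ)),
      IsSperpIdeal σ I → IsSperpIdeal σ J → I * J ≤ Q → I ≤ Q ∨ J ≤ Q

/-- A maximal proper `S^⊥`-ideal of `kΓ`. -/
def IsSperpMax (σ : (Fin n → ℤ) → (Fin n → ℤ) → kˣ)
    (Q : Ideal (AddMonoidAlgebra k (Fin n → ℤ))) : Prop :=
  IsSperpIdeal σ Q ∧ Q ≠ ⊤ ∧
    ∀ J : Ideal (AddMonoidAlgebra k (Fin n → ℤ)),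
      IsSperpIdeal σ J → J ≠ ⊤ → Q ≤ J → J = Q

/-!
Restriction `P ↦ (P : S^⊥)` commutes with the action of `H` because `H` is commutative. Over an
`S^⊥`-prime `Q`, an ideal maximal among those whose restriction lies in `Q` exists since `kΓ` is
Noetherian, and it is prime because `Q` is `S^⊥`-prime. By the Nullstellensatz the maximal ideals
are the points of the torus `H`; if `(ker γ : S^⊥) ⊆ ker δ`, then `δ γ⁻¹` is trivial on `S`, so
the maximal ideals over a given `S^⊥`-maximal ideal form one `S^⊥`-orbit, which gives
`S^⊥`-maximality of restrictions. The quotient-topology conditions follow formally from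
surjectivity and `S^⊥`-stability of the fibres.
-/

local notation "kΓ" => AddMonoidAlgebra k (Fin n → ℤ)
local notation "H" => Multiplicative (Fin n → ℤ) →* kˣ

instance : IsNoetherianRing kΓ := Algebra.FiniteType.isNoetherianRing k _

lemma Ideal.sup_mul_sup_le {R : Type*} [CommSemiring R] {P I J : Ideal R} (h : I * J ≤ P) :
    (P ⊔ I) * (P ⊔ J) ≤ P := by
  simp only [Ideal.sup_mul, Ideal.mul_sup, sup_le_iff]
  exact ⟨⟨Ideal.mul_le_right, Ideal.mul_le_right⟩, Ideal.mul_le_left, h⟩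

lemma Ideal.IsMaximal.exists_algHom_ker_eq [IsAlgClosed k] {A : Type*} [CommRing A] [Algebra k A]
    [Algebra.FiniteType k A] {M : Ideal A} (hM : M.IsMaximal) :
    ∃ φ : A →ₐ[k] k, RingHom.ker φ = M := by
  let _ := Ideal.Quotient.field M
  have : Module.Finite k (A ⧸ M) := finite_of_finite_type_of_isJacobsonRing k _
  refine ⟨(IsAlgClosed.lift : A ⧸ M →ₐ[k] k).comp (Ideal.Quotient.mkₐ k M), ?_⟩
  ext x
  simp [RingHom.mem_ker, Ideal.Quotient.eq_zero_iff_mem]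

lemma lactM_single (χ : H) (α : Fin n → ℤ) :
    lactM χ (AddMonoidAlgebra.single α (1 : k)) =
      (χ (Multiplicative.ofAdd α) : k) • AddMonoidAlgebra.single α (1 : k) :=
  AddMonoidAlgebra.lift_of (scaleMonHom χ) (Multiplicative.ofAdd α)

lemma lactM_lactM (χ χ' : H) (x : kΓ) : lactM χ (lactM χ' x) = lactM (χ * χ') x := by
  have h : (lactM χ).comp (lactM χ') = lactM (χ * χ') := by
    refine AddMonoidAlgebra.algHom_ext (fun α => ?_) (Subsingleton.elim _ _)
    simp only [AlgHom.comp_apply, lactM_single, map_smul, smul_smul, MonoidHom.mul_apply,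
      Units.val_mul, mul_comm]
  exact AlgHom.congr_fun h x

lemma lactM_one_apply (x : kΓ) : lactM (1 : H) x = x := by
  have h : lactM (1 : H) = AlgHom.id k kΓ := by
    refine AddMonoidAlgebra.algHom_ext (fun α => ?_) (Subsingleton.elim _ _)
    simp only [lactM_single, MonoidHom.one_apply, Units.val_one, one_smul, AlgHom.coe_id, id_eq]
  rw [h, AlgHom.id_apply]

lemma lactM_surjective (χ : H) : Function.Surjective (lactM χ : kΓ → kΓ) := fun y =>
  ⟨lactM χ⁻¹ y, by rw [lactM_lactM, mul_inv_cancel χ, lactM_one_apply]⟩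

lemma Ideal.IsMaximal.comap_lactM {M : Ideal kΓ} (hM : M.IsMaximal) (χ : H) :
    (Ideal.comap (lactM χ) M).IsMaximal :=
  Ideal.comap_isMaximal_of_surjective _ (lactM_surjective χ)

noncomputable def evalChar (γ : H) : kΓ →ₐ[k] k :=
  AddMonoidAlgebra.lift k k (Fin n → ℤ) ((Units.coeHom k).comp γ)

lemma evalChar_single (γ : H) (α : Fin n → ℤ) :
    evalChar γ (AddMonoidAlgebra.single α (1 : k)) = γ (Multiplicative.ofAdd α) :=
  AddMonoidAlgebra.lift_of _ (Multiplicative.ofAdd α)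

lemma exists_evalChar_eq (φ : kΓ →ₐ[k] k) : ∃ γ : H, evalChar γ = φ := by
  refine ⟨((AddMonoidAlgebra.lift k k (Fin n → ℤ)).symm φ).toHomUnits,
    AddMonoidAlgebra.algHom_ext (fun α => ?_) (Subsingleton.elim _ _)⟩
  rw [evalChar_single, MonoidHom.coe_toHomUnits, AddMonoidAlgebra.lift_symm_apply, toAdd_ofAdd]

lemma evalChar_lactM (γ χ : H) (x : kΓ) : evalChar γ (lactM χ x) = evalChar (χ * γ) x := by
  have h : (evalChar γ).comp (lactM χ) = evalChar (χ * γ) := by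
    refine AddMonoidAlgebra.algHom_ext (fun α => ?_) (Subsingleton.elim _ _)
    simp only [AlgHom.comp_apply, lactM_single, map_smul, evalChar_single, MonoidHom.mul_apply,
      Units.val_mul, smul_eq_mul]
  exact AlgHom.congr_fun h x

lemma comap_ker_evalChar (χ γ : H) :
    Ideal.comap (lactM χ) (RingHom.ker (evalChar γ)) = RingHom.ker (evalChar (χ * γ)) := by
  ext x
  rw [Ideal.mem_comap, RingHom.mem_ker, RingHom.mem_ker, evalChar_lactM]

lemma exists_ker_evalChar_eq [IsAlgClosed k] {M : Ideal kΓ} (hM : M.IsMaximal) :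
    ∃ γ : H, RingHom.ker (evalChar γ) = M := by
  obtain ⟨φ, rfl⟩ := hM.exists_algHom_ker_eq (k := k)
  obtain ⟨γ, rfl⟩ := exists_evalChar_eq φ
  exact ⟨γ, rfl⟩

section Sperp

variable {σ : (Fin n → ℤ) → (Fin n → ℤ) → kˣ}

lemma one_mem_sperpSet : (1 : H) ∈ SperpSet σ := fun _ _ => rfl

lemma mul_mem_sperpSet {χ χ' : H} (h : χ ∈ SperpSet σ) (h' : χ' ∈ SperpSet σ) :
    χ * χ' ∈ SperpSet σ := fun α hα => by
  rw [MonoidHom.mul_apply, h α hα, h' α hα, one_mul]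

lemma inv_mem_sperpSet {χ : H} (h : χ ∈ SperpSet σ) : χ⁻¹ ∈ SperpSet σ := fun α hα => by
  rw [MonoidHom.inv_apply, h α hα, inv_one]

lemma mem_resSperp {I : Ideal kΓ} {x : kΓ} :
    x ∈ resSperp σ I ↔ ∀ χ ∈ SperpSet σ, lactM χ x ∈ I := by
  simp only [resSperp, Ideal.mem_iInf, Ideal.mem_comap]

lemma le_resSperp_iff_forall {I J : Ideal kΓ} :
    J ≤ resSperp σ I ↔ ∀ χ ∈ SperpSet σ, J ≤ Ideal.comap (lactM χ) I := by
  simp only [resSperp, le_iInf_iff]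

lemma resSperp_le_comap {I : Ideal kΓ} {χ : H} (h : χ ∈ SperpSet σ) :
    resSperp σ I ≤ Ideal.comap (lactM χ) I := le_resSperp_iff_forall.1 le_rfl χ h

lemma resSperp_le_self (I : Ideal kΓ) : resSperp σ I ≤ I := fun x hx => by
  simpa only [lactM_one_apply] using mem_resSperp.1 hx 1 one_mem_sperpSet

lemma resSperp_mono {I J : Ideal kΓ} (h : I ≤ J) : resSperp σ I ≤ resSperp σ J :=
  le_resSperp_iff_forall.2 fun _ hχ => (resSperp_le_comap hχ).trans (Ideal.comap_mono h)

lemma resSperp_ne_top {I : Ideal kΓ} (hI : I ≠ ⊤) : resSperp σ I ≠ ⊤ :=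
  fun h => hI (top_le_iff.1 (h ▸ resSperp_le_self I))

lemma IsSperpIdeal.le_resSperp {Q I : Ideal kΓ} (hQ : IsSperpIdeal σ Q) (h : Q ≤ I) :
    Q ≤ resSperp σ I :=
  le_resSperp_iff_forall.2 fun χ hχ => hQ χ hχ ▸ Ideal.comap_mono h

lemma IsSperpIdeal.resSperp_eq {Q : Ideal kΓ} (hQ : IsSperpIdeal σ Q) : resSperp σ Q = Q :=
  le_antisymm (resSperp_le_self Q) (hQ.le_resSperp le_rfl)

lemma resSperp_top : resSperp σ (⊤ : Ideal kΓ) = ⊤ :=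
  IsSperpIdeal.resSperp_eq fun _ _ => Ideal.comap_top

lemma resSperp_comap (χ : H) (I : Ideal kΓ) :
    resSperp σ (Ideal.comap (lactM χ) I) = Ideal.comap (lactM χ) (resSperp σ I) := by
  ext x
  simp only [Ideal.mem_comap, mem_resSperp, lactM_lactM, mul_comm χ]

lemma isSperpIdeal_resSperp (I : Ideal kΓ) : IsSperpIdeal σ (resSperp σ I) := by
  intro χ hχ
  ext x
  simp only [Ideal.mem_comap, mem_resSperp, lactM_lactM]
  refine ⟨fun h χ' hχ' => ?_, fun h χ' hχ' => h _ (mul_mem_sperpSet hχ' hχ)⟩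
  simpa only [inv_mul_cancel_right χ' χ] using h _ (mul_mem_sperpSet hχ' (inv_mem_sperpSet hχ))

lemma resSperp_comap_of_mem {χ : H} (hχ : χ ∈ SperpSet σ) (I : Ideal kΓ) :
    resSperp σ (Ideal.comap (lactM χ) I) = resSperp σ I := by
  rw [resSperp_comap, isSperpIdeal_resSperp I χ hχ]

lemma resSperp_mul_le (I J : Ideal kΓ) : resSperp σ I * resSperp σ J ≤ resSperp σ (I * J) := by
  refine le_resSperp_iff_forall.2 fun χ hχ => Ideal.mul_le.2 fun x hx y hy => ?_
  rw [Ideal.mem_comap, map_mul]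
  exact Ideal.mul_mem_mul (resSperp_le_comap hχ hx) (resSperp_le_comap hχ hy)

lemma le_resSperp_iff_iSup_map_le {I P : Ideal kΓ} :
    I ≤ resSperp σ P ↔ (⨆ χ ∈ SperpSet σ, Ideal.map (lactM χ) I) ≤ P := by
  simp only [iSup₂_le_iff, Ideal.map_le_iff_le_comap]
  exact le_resSperp_iff_forall

lemma isSperpPrime_resSperp {P : Ideal kΓ} (hP : P.IsPrime) : IsSperpPrime σ (resSperp σ P) := by
  refine ⟨isSperpIdeal_resSperp P, resSperp_ne_top hP.ne_top, fun I J hI hJ hIJ => ?_⟩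
  exact (hP.mul_le.1 (hIJ.trans (resSperp_le_self P))).imp hI.le_resSperp hJ.le_resSperp

/-- If `xy ∈ P` with `x, y ∉ P`, the restrictions of `P + (x)` and `P + (y)` are `S^⊥`-ideals
outside `Q` whose product lies in `Q`. -/
lemma isPrime_of_maximal_resSperp_le {Q P : Ideal kΓ} (hQ : IsSperpPrime σ Q)
    (hP : Maximal (fun I => resSperp σ I ≤ Q) P) : P.IsPrime where
  ne_top' h := hQ.2.1 (top_le_iff.1 (resSperp_top (σ := σ) ▸ h ▸ hP.prop))
  mem_or_mem' := by
    by_contra! ⟨x, y, hxy, hx, hy⟩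
    have hle : Ideal.span {x} * Ideal.span {y} ≤ P := by
      rwa [Ideal.span_singleton_mul_span_singleton, Ideal.span_singleton_le_iff_mem]
    have hx' := hP.not_prop_of_gt (Submodule.lt_sup_iff_notMem.2 hx)
    have hy' := hP.not_prop_of_gt (Submodule.lt_sup_iff_notMem.2 hy)
    refine (hQ.2.2 _ _ (isSperpIdeal_resSperp _) (isSperpIdeal_resSperp _) ?_).elim hx' hy'
    exact (resSperp_mul_le _ _).trans ((resSperp_mono (Ideal.sup_mul_sup_le hle)).trans hP.prop)

lemma exists_isPrime_resSperp_eq {Q : Ideal kΓ} (hQ : IsSperpPrime σ Q) :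
    ∃ P : Ideal kΓ, P.IsPrime ∧ resSperp σ P = Q := by
  obtain ⟨P, hQP, hP⟩ :=
    exists_maximal_ge_of_wellFoundedGT (fun I => resSperp σ I ≤ Q) Q hQ.1.resSperp_eq.le
  exact ⟨P, isPrime_of_maximal_resSperp_le hQ hP, le_antisymm hP.prop (hQ.1.le_resSperp hQP)⟩

/-- Since `yᵅ - γ(α)` lies in `(ker γ : S^⊥)` for `α ∈ S`, any point `δ` whose kernel contains that
ideal agrees with `γ` on `S`. -/
lemma mul_inv_mem_sperpSet_of_resSperp_le {γ δ : H}
    (h : resSperp σ (RingHom.ker (evalChar γ)) ≤ RingHom.ker (evalChar δ)) :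
    δ * γ⁻¹ ∈ SperpSet σ := by
  intro α hα
  have hmem : AddMonoidAlgebra.single α (1 : k) - algebraMap k kΓ (γ (Multiplicative.ofAdd α))
      ∈ resSperp σ (RingHom.ker (evalChar γ)) := by
    refine mem_resSperp.2 fun χ hχ => ?_
    simp only [RingHom.mem_ker, evalChar_lactM, map_sub, evalChar_single, AlgHom.commutes,
      Algebra.algebraMap_self_apply, MonoidHom.mul_apply, hχ α hα, one_mul, sub_self]
  have hδ := h hmem
  simp only [RingHom.mem_ker, map_sub, evalChar_single, AlgHom.commutes,
    Algebra.algebraMap_self_apply, sub_eq_zero, Units.val_inj] at hδ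
  rw [MonoidHom.mul_apply, MonoidHom.inv_apply, hδ, mul_inv_cancel]

lemma isSperpMax_resSperp [IsAlgClosed k] {M : Ideal kΓ} (hM : M.IsMaximal) :
    IsSperpMax σ (resSperp σ M) := by
  refine ⟨isSperpIdeal_resSperp M, resSperp_ne_top hM.ne_top, fun J hJ hJtop hMJ => ?_⟩
  obtain ⟨M', hM', hJM'⟩ := Ideal.exists_le_maximal J hJtop
  obtain ⟨γ, rfl⟩ := exists_ker_evalChar_eq hM
  obtain ⟨δ, rfl⟩ := exists_ker_evalChar_eq hM'
  have hχ := mul_inv_mem_sperpSet_of_resSperp_le (hMJ.trans hJM')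
  have hδγ :
      RingHom.ker (evalChar δ) = Ideal.comap (lactM (δ * γ⁻¹)) (RingHom.ker (evalChar γ)) := by
    rw [comap_ker_evalChar, inv_mul_cancel_right δ γ]
  refine le_antisymm ?_ hMJ
  calc J ≤ resSperp σ (RingHom.ker (evalChar δ)) := hJ.le_resSperp hJM'
    _ = resSperp σ (RingHom.ker (evalChar γ)) := by rw [hδγ, resSperp_comap_of_mem hχ]

lemma exists_isMaximal_resSperp_eq {Q : Ideal kΓ} (hQ : IsSperpMax σ Q) :
    ∃ M : Ideal kΓ, M.IsMaximal ∧ resSperp σ M = Q := by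
  obtain ⟨M, hM, hQM⟩ := Ideal.exists_le_maximal Q hQ.2.1
  exact ⟨M, hM, hQ.2.2 _ (isSperpIdeal_resSperp M) (resSperp_ne_top hM.ne_top)
    (hQ.1.le_resSperp hQM)⟩

/-- The preimage of `{Q | I ≤ Q}` is cut out by the `S^⊥`-ideal generated by `I`. Conversely, the
fibres of `resSperp` are `S^⊥`-stable, so if the preimage of `V` is `{P | I ≤ P}` then `I` lies in
every `(P : S^⊥)` with `P` over `V`. -/
lemma resSperp_closed_iff_preimage_closed {X Y : Ideal kΓ → Prop}
    (hmaps : ∀ P, X P → Y (resSperp σ P)) (hsurj : ∀ Q, Y Q → ∃ P, X P ∧ resSperp σ P = Q)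
    (hcomap : ∀ χ ∈ SperpSet σ, ∀ P, X P → X (Ideal.comap (lactM χ) P))
    (V : Set (Ideal kΓ)) (hV : V ⊆ {Q | Y Q}) :
    (∃ I : Ideal kΓ, V = {Q | Y Q ∧ I ≤ Q}) ↔
      ∃ I : Ideal kΓ, {P | X P ∧ resSperp σ P ∈ V} = {P | X P ∧ I ≤ P} := by
  constructor
  · rintro ⟨I, rfl⟩
    refine ⟨⨆ χ ∈ SperpSet σ, Ideal.map (lactM χ) I, Set.ext fun P => ?_⟩
    simp only [Set.mem_ofPred_eq, ← le_resSperp_iff_iSup_map_le]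
    exact ⟨fun h => ⟨h.1, h.2.2⟩, fun h => ⟨h.1, hmaps P h.1, h.2⟩⟩
  · rintro ⟨I, hI⟩
    have hpre : ∀ P, X P → (resSperp σ P ∈ V ↔ I ≤ P) := fun P hP =>
      (and_iff_right hP).symm.trans ((Set.ext_iff.1 hI P).trans (and_iff_right hP))
    refine ⟨I, Set.ext fun Q => ⟨fun hQV => ⟨hV hQV, ?_⟩, fun ⟨hQ, hIQ⟩ => ?_⟩⟩
    · obtain ⟨P, hP, rfl⟩ := hsurj Q (hV hQV)
      refine le_resSperp_iff_forall.2 fun χ hχ => (hpre _ (hcomap χ hχ P hP)).1 ?_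
      rwa [resSperp_comap_of_mem hχ]
    · obtain ⟨P, hP, rfl⟩ := hsurj Q hQ
      exact (hpre P hP).2 (hIQ.trans (resSperp_le_self P))

end Sperp

theorem stmt_16_general {k : Type*} [Field k] [IsAlgClosed k] {n : ℕ}
    (σ : (Fin n → ℤ) → (Fin n → ℤ) → kˣ) :
    -- the first map is well defined into `S^⊥-spec kΓ` and onto it
    (∀ P : Ideal (AddMonoidAlgebra k (Fin n → ℤ)), P.IsPrime → IsSperpPrime σ (resSperp σ P)) ∧
    (∀ Q : Ideal (AddMonoidAlgebra k (Fin n → ℤ)), IsSperpPrime σ Q →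
        ∃ P : Ideal (AddMonoidAlgebra k (Fin n → ℤ)), P.IsPrime ∧ resSperp σ P = Q) ∧
    -- `H`-equivariance
    (∀ χ : Multiplicative (Fin n → ℤ) →* kˣ, ∀ I : Ideal (AddMonoidAlgebra k (Fin n → ℤ)),
        resSperp σ (Ideal.comap (lactM χ) I) = Ideal.comap (lactM χ) (resSperp σ I)) ∧
    -- quotient topology condition for `spec kΓ → S^⊥-spec kΓ`
    (∀ V ⊆ {Q : Ideal (AddMonoidAlgebra k (Fin n → ℤ)) | IsSperpPrime σ Q},
        (∃ I : Ideal (AddMonoidAlgebra k (Fin n → ℤ)),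
            V = {Q | IsSperpPrime σ Q ∧ I ≤ Q}) ↔
        (∃ I : Ideal (AddMonoidAlgebra k (Fin n → ℤ)),
            {P | P.IsPrime ∧ resSperp σ P ∈ V} = {P | P.IsPrime ∧ I ≤ P})) ∧
    -- the second map is well defined into `S^⊥-max kΓ` and onto it
    (∀ M : Ideal (AddMonoidAlgebra k (Fin n → ℤ)), M.IsMaximal → IsSperpMax σ (resSperp σ M)) ∧
    (∀ Q : Ideal (AddMonoidAlgebra k (Fin n → ℤ)), IsSperpMax σ Q →
        ∃ M : Ideal (AddMonoidAlgebra k (Fin n → ℤ)), M.IsMaximal ∧ resSperp σ M = Q) ∧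
    -- quotient topology condition for `max kΓ → S^⊥-max kΓ` (relative topologies)
    (∀ V ⊆ {Q : Ideal (AddMonoidAlgebra k (Fin n → ℤ)) | IsSperpMax σ Q},
        (∃ I : Ideal (AddMonoidAlgebra k (Fin n → ℤ)),
            V = {Q | IsSperpMax σ Q ∧ I ≤ Q}) ↔
        (∃ I : Ideal (AddMonoidAlgebra k (Fin n → ℤ)),
            {M | M.IsMaximal ∧ resSperp σ M ∈ V} = {M | M.IsMaximal ∧ I ≤ M})) := by
  exact ⟨fun _ => isSperpPrime_resSperp, fun _ => exists_isPrime_resSperp_eq, resSperp_comap,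
    resSperp_closed_iff_preimage_closed (fun _ => isSperpPrime_resSperp)
      (fun _ => exists_isPrime_resSperp_eq) fun _ _ _ hP => hP.comap _,
    fun _ => isSperpMax_resSperp, fun _ => exists_isMaximal_resSperp_eq,
    resSperp_closed_iff_preimage_closed (fun _ => isSperpMax_resSperp)
      (fun _ => exists_isMaximal_resSperp_eq) fun χ _ _ hM => hM.comap_lactM χ⟩

/-- Proposition 3.10: `P ↦ (P : S^⊥)` gives `H`-equivariant topological
quotient maps `spec kΓ → S^⊥-spec kΓ` and `max kΓ → S^⊥-max kΓ`. -/
theorem stmt_16 {k : Type*} [Field k] [IsAlgClosed k] {n : ℕ}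
    (σ : (Fin n → ℤ) → (Fin n → ℤ) → kˣ)
    (halt : ∀ α, σ α α = 1)
    (hmul₁ : ∀ α β γ, σ (α + β) γ = σ α γ * σ β γ)
    (hmul₂ : ∀ α β γ, σ α (β + γ) = σ α β * σ α γ) :
    -- the first map is well defined into `S^⊥-spec kΓ` and onto it
    (∀ P : Ideal (AddMonoidAlgebra k (Fin n → ℤ)), P.IsPrime → IsSperpPrime σ (resSperp σ P)) ∧
    (∀ Q : Ideal (AddMonoidAlgebra k (Fin n → ℤ)), IsSperpPrime σ Q →
        ∃ P : Ideal (AddMonoidAlgebra k (Fin n → ℤ)), P.IsPrime ∧ resSperp σ P = Q) ∧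
    -- `H`-equivariance
    (∀ χ : Multiplicative (Fin n → ℤ) →* kˣ, ∀ I : Ideal (AddMonoidAlgebra k (Fin n → ℤ)),
        resSperp σ (Ideal.comap (lactM χ) I) = Ideal.comap (lactM χ) (resSperp σ I)) ∧
    -- quotient topology condition for `spec kΓ → S^⊥-spec kΓ`
    (∀ V ⊆ {Q : Ideal (AddMonoidAlgebra k (Fin n → ℤ)) | IsSperpPrime σ Q},
        (∃ I : Ideal (AddMonoidAlgebra k (Fin n → ℤ)),
            V = {Q | IsSperpPrime σ Q ∧ I ≤ Q}) ↔
        (∃ I : Ideal (AddMonoidAlgebra k (Fin n → ℤ)),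
            {P | P.IsPrime ∧ resSperp σ P ∈ V} = {P | P.IsPrime ∧ I ≤ P})) ∧
    -- the second map is well defined into `S^⊥-max kΓ` and onto it
    (∀ M : Ideal (AddMonoidAlgebra k (Fin n → ℤ)), M.IsMaximal → IsSperpMax σ (resSperp σ M)) ∧
    (∀ Q : Ideal (AddMonoidAlgebra k (Fin n → ℤ)), IsSperpMax σ Q →
        ∃ M : Ideal (AddMonoidAlgebra k (Fin n → ℤ)), M.IsMaximal ∧ resSperp σ M = Q) ∧
    -- quotient topology condition for `max kΓ → S^⊥-max kΓ` (relative topologies)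
    (∀ V ⊆ {Q : Ideal (AddMonoidAlgebra k (Fin n → ℤ)) | IsSperpMax σ Q},
        (∃ I : Ideal (AddMonoidAlgebra k (Fin n → ℤ)),
            V = {Q | IsSperpMax σ Q ∧ I ≤ Q}) ↔
        (∃ I : Ideal (AddMonoidAlgebra k (Fin n → ℤ)),
            {M | M.IsMaximal ∧ resSperp σ M ∈ V} = {M | M.IsMaximal ∧ I ≤ M})) :=
  stmt_16_general σ
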